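/- arXiv:2409.07948 — 3 statements merged into one kernel-verified Lean document; each statement's English description precedes it below -/
import Mathlib

section
/- Let W(z) = z - log(z) for z > 0 and L(w) = w + log(w) for w > 0. Then for any z ≥ 1, L(W(z)) = z - ε(z) where 0 ≤ ε(z) ≤ log(z)/(z - log(z)). -/
open Real

/-! With `w = z - log z`, `L (W z) = w + log w = z - ε z` by definition of `ε`, and
`ε z = log (z / w)`. Since `log z ≥ 0` we have `w ≤ z`, so `ε z ≥ 0`, while `log t ≤ t - 1`
at `t = z / w` gives `ε z ≤ z / w - 1 = log z / w`. -/

lemma one_le_self_sub_log {x : ℝ} (hx : 0 < x) : 1 ≤ x - log x := by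
  linarith [log_le_sub_one_of_pos hx]

lemma log_sub_log_le_sub_div {a b : ℝ} (ha : 0 < a) (hb : 0 < b) :
    log a - log b ≤ (a - b) / b := by
  rw [← log_div ha.ne' hb.ne']
  calc log (a / b) ≤ a / b - 1 := log_le_sub_one_of_pos (div_pos ha hb)
    _ = (a - b) / b := by field_simp

/-- Lambert-type approximate inverse: with `W z = z - log z`, `L w = w + log w`,
and `ε z = log z - log (z - log z)`, for every `z ≥ 1` we have
`L (W z) = z - ε z` with `0 ≤ ε z ≤ log z / (z - log z)`. -/
theorem logLambert_approx_inverse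
    (W L ε : ℝ → ℝ)
    (hW : ∀ z > 0, W z = z - Real.log z)
    (hL : ∀ w > 0, L w = w + Real.log w)
    (hε : ∀ z, ε z = Real.log z - Real.log (z - Real.log z)) :
    ∀ z ≥ 1, L (W z) = z - ε z ∧ 0 ≤ ε z ∧ ε z ≤ Real.log z / (z - Real.log z) := by
  intro z hz
  have hz0 : 0 < z := by linarith
  have hw : 0 < z - log z := one_pos.trans_le (one_le_self_sub_log hz0)
  have hw_le : z - log z ≤ z := sub_le_self z (log_nonneg hz)
  rw [hε]
  refine ⟨?_, sub_nonneg.2 (log_le_log hw hw_le), ?_⟩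
  · rw [hW z hz0, hL _ hw]
    ring
  · simpa only [sub_sub_cancel] using log_sub_log_le_sub_div hz0 hw
end

section
/- Let M be the substochastic restriction of a Markov transition matrix to X₀ with Perron–Frobenius eigenpair (λ, v), λ ∈ (0,1), v > 0, and suppose the twisted chain P̌_{ij} = λ^{-1} vᵢ^{-1} M_{ij} vⱼ converges: P̌ⁿ_{ij} → π̌(j) geometrically as n → ∞ for the unique invariant pmf π̌. Then for each initial state i ∈ X₀, P{τ > n | Φ₀ = i} = vᵢ [π̌(1/v) + εₙ(i)] λⁿ, where π̌(1/v) = Σⱼ π̌(j)/vⱼ and εₙ(i) → 0 geometrically fast; in particular lim_{n→∞} (1/n) log P{τ > n | Φ₀ = i} = log λ. -/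
open Real Matrix Filter

/-!
The Doob transform is a diagonal conjugation, `diagonal v * P̌ = (λ⁻¹ • M) * diagonal v`, which
passes to powers and gives `∑ⱼ (Mⁿ)ᵢⱼ = λⁿ vᵢ ∑ⱼ (P̌ⁿ)ᵢⱼ / vⱼ`. Since `v` is a right eigenvector
of `M`, `P̌` is row stochastic, so the last sum is an average of `1/v` and stays between positive
constants, which gives the logarithmic limit; replacing `(P̌ⁿ)ᵢⱼ` by `π̌(j)` in it costs the
geometrically small error `εₙ(i)`.
-/

section Doob

variable {ι : Type*} [Fintype ι] [DecidableEq ι] {M P : Matrix ι ι ℝ} {c : ℝ} {v : ι → ℝ}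

theorem semiconjBy_diagonal_of_doob (hv : ∀ i, v i ≠ 0)
    (hP : ∀ i j, P i j = c⁻¹ * (v i)⁻¹ * M i j * v j) :
    SemiconjBy (diagonal v) P (c⁻¹ • M) := by
  ext i j
  rw [diagonal_mul, mul_diagonal, Matrix.smul_apply, hP, smul_eq_mul]
  field_simp [hv i]

theorem pow_apply_eq_of_doob (hc : c ≠ 0) (hv : ∀ i, v i ≠ 0)
    (hP : ∀ i j, P i j = c⁻¹ * (v i)⁻¹ * M i j * v j) (n : ℕ) (i j : ι) :
    (M ^ n) i j = c ^ n * v i * (P ^ n) i j / v j := by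
  have h := congrFun (congrFun ((semiconjBy_diagonal_of_doob hv hP).pow_right n).eq i) j
  rw [diagonal_mul, mul_diagonal, smul_pow, Matrix.smul_apply, smul_eq_mul] at h
  rw [mul_assoc, h, inv_pow]
  field_simp [hv j, hc]

theorem sum_pow_apply_eq_of_doob (hc : c ≠ 0) (hv : ∀ i, v i ≠ 0)
    (hP : ∀ i j, P i j = c⁻¹ * (v i)⁻¹ * M i j * v j) (n : ℕ) (i : ι) :
    ∑ j, (M ^ n) i j = c ^ n * v i * ∑ j, (P ^ n) i j / v j := by
  simp only [pow_apply_eq_of_doob hc hv hP, Finset.mul_sum, mul_div_assoc]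

theorem mem_rowStochastic_of_doob (hc : 0 < c) (hv : ∀ i, 0 < v i) (hM : ∀ i j, 0 ≤ M i j)
    (heig : ∀ i, ∑ j, M i j * v j = c * v i)
    (hP : ∀ i j, P i j = c⁻¹ * (v i)⁻¹ * M i j * v j) :
    P ∈ rowStochastic ℝ ι := by
  refine mem_rowStochastic_iff_sum.2 ⟨fun i j => ?_, fun i => ?_⟩
  · rw [hP]
    have := hv i; have := hv j; have := hM i j
    positivity
  · simp_rw [hP, mul_assoc, ← Finset.mul_sum, heig]
    field_simp [hc.ne', (hv i).ne']

end Doob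

theorem sum_mul_mem_Icc_of_mem_rowStochastic {ι : Type*} [Fintype ι] [DecidableEq ι]
    {P : Matrix ι ι ℝ} (hP : P ∈ rowStochastic ℝ ι) {w : ι → ℝ} {a b : ℝ}
    (hw : ∀ j, w j ∈ Set.Icc a b) (i : ι) :
    ∑ j, P i j * w j ∈ Set.Icc a b := by
  have hrow := sum_row_of_mem_rowStochastic hP i
  constructor
  · calc a = ∑ j, P i j * a := by rw [← Finset.sum_mul, hrow, one_mul]
      _ ≤ ∑ j, P i j * w j := Finset.sum_le_sum fun j _ =>
          mul_le_mul_of_nonneg_left (hw j).1 (nonneg_of_mem_rowStochastic hP)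
  · calc ∑ j, P i j * w j ≤ ∑ j, P i j * b := Finset.sum_le_sum fun j _ =>
          mul_le_mul_of_nonneg_left (hw j).2 (nonneg_of_mem_rowStochastic hP)
      _ = b := by rw [← Finset.sum_mul, hrow, one_mul]

theorem tendsto_log_pow_mul_div_nat {lam a b : ℝ} (hlam : 0 < lam) (ha : 0 < a) {g : ℕ → ℝ}
    (hg : ∀ n, g n ∈ Set.Icc a b) :
    Tendsto (fun n : ℕ => (1 / (n : ℝ)) * Real.log (lam ^ n * g n)) atTop
      (nhds (Real.log lam)) := by
  have hg0 : ∀ n, 0 < g n := fun n => ha.trans_le (hg n).1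
  have hbounded : IsBoundedUnder (· ≤ ·) atTop fun n => ‖Real.log (g n)‖ := by
    refine isBoundedUnder_of ⟨|Real.log a| + |Real.log b|, fun n => ?_⟩
    rw [Real.norm_eq_abs, abs_le]
    have hlo := Real.log_le_log ha (hg n).1
    have hhi := Real.log_le_log (hg0 n) (hg n).2
    constructor <;> linarith [neg_abs_le (Real.log a), le_abs_self (Real.log b),
      abs_nonneg (Real.log a), abs_nonneg (Real.log b)]
  have hsmall := tendsto_one_div_atTop_nhds_zero_nat.zero_mul_isBoundedUnder_le hbounded
  have hsum := (tendsto_const_nhds (x := Real.log lam)).add hsmall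
  rw [add_zero] at hsum
  refine hsum.congr' ?_
  filter_upwards [eventually_ne_atTop 0] with n hn
  rw [Real.log_mul (pow_ne_zero n hlam.ne') (hg0 n).ne', Real.log_pow]
  field_simp

theorem abs_sum_sub_div_le {ι : Type*} [Fintype ι] {x y v : ι → ℝ} {δ : ℝ}
    (hv : ∀ j, 0 < v j) (hxy : ∀ j, |x j - y j| ≤ δ) :
    |∑ j, (x j - y j) / v j| ≤ δ * ∑ j, (v j)⁻¹ := by
  calc |∑ j, (x j - y j) / v j| ≤ ∑ j, |x j - y j| / v j := by
        refine (Finset.abs_sum_le_sum_abs _ _).trans_eq (Finset.sum_congr rfl fun j _ => ?_)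
        rw [abs_div, abs_of_pos (hv j)]
    _ ≤ ∑ j, δ / v j := Finset.sum_le_sum fun j _ => div_le_div_of_nonneg_right (hxy j) (hv j).le
    _ = δ * ∑ j, (v j)⁻¹ := by simp only [div_eq_mul_inv, Finset.mul_sum]

theorem inv_mem_Icc_inv_sum_sum_inv {ι : Type*} [Fintype ι] {v : ι → ℝ} (hv : ∀ j, 0 < v j)
    (j : ι) : (v j)⁻¹ ∈ Set.Icc (∑ k, v k)⁻¹ (∑ k, (v k)⁻¹) :=
  ⟨inv_anti₀ (hv j) (Finset.single_le_sum (fun k _ => (hv k).le) (Finset.mem_univ j)),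
    Finset.single_le_sum (fun k _ => (inv_pos.2 (hv k)).le) (Finset.mem_univ j)⟩

theorem survival_probability_asymptotics_general
    (N₀ : ℕ) (M : Matrix (Fin N₀) (Fin N₀) ℝ)
    (hMnonneg : ∀ i j, 0 ≤ M i j)
    (lam : ℝ) (hlam : lam ∈ Set.Ioo (0 : ℝ) 1)
    (v : Fin N₀ → ℝ) (hv : ∀ i, 0 < v i)
    (heig : ∀ i, ∑ j, M i j * v j = lam * v i)
    (Pch : Matrix (Fin N₀) (Fin N₀) ℝ)
    (hPch : ∀ i j, Pch i j = lam⁻¹ * (v i)⁻¹ * M i j * v j)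
    (pich : Fin N₀ → ℝ)
    (hergodic : ∃ C r : ℝ, 0 ≤ C ∧ 0 ≤ r ∧ r < 1 ∧
      ∀ n : ℕ, ∀ i j, |(Pch ^ n) i j - pich j| ≤ C * r ^ n) :
    ∃ ε : ℕ → Fin N₀ → ℝ,
      (∃ C r : ℝ, 0 ≤ C ∧ 0 ≤ r ∧ r < 1 ∧ ∀ n i, |ε n i| ≤ C * r ^ n) ∧
      (∀ n : ℕ, ∀ i, ∑ j, (M ^ n) i j
          = v i * ((∑ j, pich j / v j) + ε n i) * lam ^ n) ∧
      (∀ i, Tendsto (fun n : ℕ => (1 / (n : ℝ)) * Real.log (∑ j, (M ^ n) i j))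
        atTop (nhds (Real.log lam))) := by
  obtain ⟨C, r, hC, hr0, hr1, hCr⟩ := hergodic
  have hsurvival := sum_pow_apply_eq_of_doob hlam.1.ne' (fun i => (hv i).ne') hPch
  have hstoch := mem_rowStochastic_of_doob hlam.1 hv hMnonneg heig hPch
  refine ⟨fun n i => ∑ j, ((Pch ^ n) i j - pich j) / v j,
    ⟨C * ∑ j, (v j)⁻¹, r, mul_nonneg hC (Finset.sum_nonneg fun j _ => (inv_pos.2 (hv j)).le),
      hr0, hr1, fun n i => ?_⟩, fun n i => ?_, fun i => ?_⟩
  · calc |∑ j, ((Pch ^ n) i j - pich j) / v j| ≤ C * r ^ n * ∑ j, (v j)⁻¹ :=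
          abs_sum_sub_div_le hv (hCr n i)
      _ = C * (∑ j, (v j)⁻¹) * r ^ n := by ring
  · rw [hsurvival, ← Finset.sum_add_distrib]
    simp only [sub_div, add_sub_cancel]
    ring
  · have hbounds (n : ℕ) : v i * ∑ j, (Pch ^ n) i j / v j
        ∈ Set.Icc (v i * (∑ k, v k)⁻¹) (v i * ∑ k, (v k)⁻¹) := by
      have h := sum_mul_mem_Icc_of_mem_rowStochastic (pow_mem hstoch n)
        (inv_mem_Icc_inv_sum_sum_inv hv) i
      simp only [← div_eq_mul_inv] at h
      exact ⟨mul_le_mul_of_nonneg_left h.1 (hv i).le, mul_le_mul_of_nonneg_left h.2 (hv i).le⟩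
    have hpos : 0 < v i * (∑ k, v k)⁻¹ :=
      mul_pos (hv i) (inv_pos.2 (Finset.sum_pos (fun k _ => hv k) ⟨i, Finset.mem_univ i⟩))
    simpa only [hsurvival, mul_assoc] using tendsto_log_pow_mul_div_nat hlam.1 hpos hbounds

/-- Survival probability asymptotics: with the taboo probabilities
`P{Φₙ = j, τ > n | Φ₀ = i} = (Mⁿ)_{ij}`, the Perron–Frobenius eigenpair
`(λ, v)` of the substochastic matrix `M`, and geometric ergodicity of the
Doob transform `P̌`, the survival probability satisfies
`P{τ > n | Φ₀ = i} = vᵢ [pich(1/v) + εₙ(i)] λⁿ` with `εₙ(i) → 0` geometrically,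
and in particular `(1/n) log P{τ > n | Φ₀ = i} → log λ`. -/
theorem survival_probability_asymptotics
    (N₀ : ℕ) (hN₀ : 0 < N₀) (M : Matrix (Fin N₀) (Fin N₀) ℝ)
    (hMnonneg : ∀ i j, 0 ≤ M i j)
    (lam : ℝ) (hlam : lam ∈ Set.Ioo (0 : ℝ) 1)
    (v : Fin N₀ → ℝ) (hv : ∀ i, 0 < v i)
    (heig : ∀ i, ∑ j, M i j * v j = lam * v i)
    (Pch : Matrix (Fin N₀) (Fin N₀) ℝ)
    (hPch : ∀ i j, Pch i j = lam⁻¹ * (v i)⁻¹ * M i j * v j)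
    (pich : Fin N₀ → ℝ)
    (hergodic : ∃ C r : ℝ, 0 ≤ C ∧ 0 ≤ r ∧ r < 1 ∧
      ∀ n : ℕ, ∀ i j, |(Pch ^ n) i j - pich j| ≤ C * r ^ n) :
    ∃ ε : ℕ → Fin N₀ → ℝ,
      (∃ C r : ℝ, 0 ≤ C ∧ 0 ≤ r ∧ r < 1 ∧ ∀ n i, |ε n i| ≤ C * r ^ n) ∧
      (∀ n : ℕ, ∀ i, ∑ j, (M ^ n) i j
          = v i * ((∑ j, pich j / v j) + ε n i) * lam ^ n) ∧
      (∀ i, Tendsto (fun n : ℕ => (1 / (n : ℝ)) * Real.log (∑ j, (M ^ n) i j))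
        atTop (nhds (Real.log lam))) :=
  survival_probability_asymptotics_general N₀ M hMnonneg lam hlam v hv heig Pch hPch pich hergodic
end

section
/- Under the setup above, the quasi-stationary distribution exists: P{Φₙ = j | τ > n, Φ₀ = i} → π̃(j) as n → ∞, where π̃(j) = α vⱼ^{-1} π̌(j) with normalizing constant α = (Σₖ π̌(k)/vₖ)^{-1}, and convergence is at a geometric rate. -/
open Real Matrix Filter

/-- Quasi-stationary (Yaglom) limit: under the Perron–Frobenius setup for the
substochastic matrix `M` with eigenpair `(λ, v)` and geometrically ergodic
Doob transform `P̌` with invariant pmf `π̌`, the conditional law of the state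
given survival converges geometrically fast to
`π̃ j = α π̌ j / vⱼ`, `α = (∑ₖ π̌ k / vₖ)⁻¹`. -/
theorem quasi_stationary_limit
    (N₀ : ℕ) (hN₀ : 0 < N₀) (M : Matrix (Fin N₀) (Fin N₀) ℝ)
    (hMnonneg : ∀ i j, 0 ≤ M i j)
    (lam : ℝ) (hlam : lam ∈ Set.Ioo (0 : ℝ) 1)
    (v : Fin N₀ → ℝ) (hv : ∀ i, 0 < v i)
    (heig : ∀ i, ∑ j, M i j * v j = lam * v i)
    (Pch : Matrix (Fin N₀) (Fin N₀) ℝ)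
    (hPch : ∀ i j, Pch i j = lam⁻¹ * (v i)⁻¹ * M i j * v j)
    (pich : Fin N₀ → ℝ) (hpichpos : ∀ j, 0 < pich j)
    (hergodic : ∃ C r : ℝ, 0 ≤ C ∧ 0 ≤ r ∧ r < 1 ∧
      ∀ n : ℕ, ∀ i j, |(Pch ^ n) i j - pich j| ≤ C * r ^ n)
    (pitilde : Fin N₀ → ℝ) (α : ℝ)
    (hα : α = (∑ k, pich k / v k)⁻¹)
    (hpitilde : ∀ j, pitilde j = α * pich j / v j) :
    ∀ i j, (Tendsto (fun n : ℕ => (M ^ n) i j / ∑ k, (M ^ n) i k)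
        atTop (nhds (pitilde j))) ∧
      ∃ C r : ℝ, 0 ≤ C ∧ 0 ≤ r ∧ r < 1 ∧
        ∀ n : ℕ, |(M ^ n) i j / (∑ k, (M ^ n) i k) - pitilde j| ≤ C * r ^ n := by
  obtain ⟨hlam0, hlam1⟩ := hlam
  obtain ⟨C, r, hC, hr0, hr1, hbound⟩ := hergodic
  have hne : Nonempty (Fin N₀) := Fin.pos_iff_nonempty.mp hN₀
  have hneF : (Finset.univ : Finset (Fin N₀)).Nonempty := Finset.univ_nonempty
  have hvne : ∀ k, v k ≠ 0 := fun k => (hv k).ne'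
  have hlamne : lam ≠ 0 := hlam0.ne'
  -- Pch entries nonneg
  have hPchnn : ∀ a b, 0 ≤ Pch a b := by
    intro a b
    rw [hPch]
    have h1 := hMnonneg a b
    have h2 := hv a; have h3 := hv b
    positivity
  -- powers of Pch nonneg
  have hPownn : ∀ n : ℕ, ∀ a b, 0 ≤ (Pch ^ n) a b := by
    intro n
    induction n with
    | zero =>
      intro a b
      simp only [pow_zero, Matrix.one_apply]
      split <;> norm_num
    | succ n ih =>
      intro a b
      rw [pow_succ, Matrix.mul_apply]
      exact Finset.sum_nonneg fun k _ => mul_nonneg (ih a k) (hPchnn k b)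
  -- Pch is stochastic
  have hrow : ∀ a, ∑ b, Pch a b = 1 := by
    intro a
    have h1 : ∑ b, Pch a b = lam⁻¹ * (v a)⁻¹ * ∑ b, M a b * v b := by
      rw [Finset.mul_sum]
      exact Finset.sum_congr rfl fun b _ => by rw [hPch]; ring
    rw [h1, heig a]
    have := hvne a
    field_simp
  have hrown : ∀ n : ℕ, ∀ a, ∑ b, (Pch ^ n) a b = 1 := by
    intro n
    induction n with
    | zero => intro a; simp [Matrix.one_apply]
    | succ n ih =>
      intro a
      rw [pow_succ]
      simp only [Matrix.mul_apply]
      rw [Finset.sum_comm]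
      calc ∑ k, ∑ b, (Pch ^ n) a k * Pch k b
          = ∑ k, (Pch ^ n) a k * 1 :=
            Finset.sum_congr rfl fun k _ => by rw [← Finset.mul_sum, hrow k]
        _ = 1 := by simpa using ih a
  -- M in terms of Pch
  have hM : ∀ a b, M a b = lam * v a * Pch a b * (v b)⁻¹ := by
    intro a b
    rw [hPch]
    have h1 := hvne a; have h2 := hvne b
    field_simp
  -- key similarity formula for powers
  have key : ∀ n : ℕ, ∀ a b, (M ^ n) a b = lam ^ n * v a * (Pch ^ n) a b * (v b)⁻¹ := by
    intro n
    induction n with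
    | zero =>
      intro a b
      by_cases h : a = b
      · subst h
        simp [Matrix.one_apply, hvne a]
      · simp [Matrix.one_apply, h]
    | succ n ih =>
      intro a b
      rw [pow_succ M n, pow_succ Pch n, Matrix.mul_apply, Matrix.mul_apply]
      have hterm : ∀ k, (M ^ n) a k * M k b
          = lam ^ n * lam * v a * ((Pch ^ n) a k * Pch k b) * (v b)⁻¹ := by
        intro k
        rw [ih a k, hM k b]
        have hk := hvne k
        rw [show lam ^ n * v a * (Pch ^ n) a k * (v k)⁻¹ * (lam * v k * Pch k b * (v b)⁻¹)
              = lam ^ n * lam * v a * ((Pch ^ n) a k * Pch k b) * (v b)⁻¹ * ((v k)⁻¹ * v k) by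
            ring,
          inv_mul_cancel₀ hk, mul_one]
      rw [Finset.sum_congr rfl fun k _ => hterm k]
      rw [← Finset.sum_mul, ← Finset.mul_sum]
      ring
  intro i j
  -- positivity of the scaling constant
  have hc : ∀ n : ℕ, (0:ℝ) < lam ^ n * v i := fun n => mul_pos (pow_pos hlam0 n) (hv i)
  -- notation
  set a : ℕ → ℝ := fun n => (Pch ^ n) i j * (v j)⁻¹ with ha
  set Sn : ℕ → ℝ := fun n => ∑ k, (Pch ^ n) i k * (v k)⁻¹ with hSn
  have hratio : ∀ n : ℕ, (M ^ n) i j / ∑ k, (M ^ n) i k = a n / Sn n := by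
    intro n
    have h1 : ∑ k, (M ^ n) i k = (lam ^ n * v i) * Sn n := by
      simp only [hSn, Finset.mul_sum]
      exact Finset.sum_congr rfl fun k _ => by rw [key n i k]; ring
    have h2 : (M ^ n) i j = (lam ^ n * v i) * a n := by
      rw [key n i j]; simp only [ha]; ring
    rw [h2, h1, mul_div_mul_left _ _ (hc n).ne']
  -- extrema of v
  set vmax := Finset.univ.sup' hneF v with hvmaxdef
  set vmin := Finset.univ.inf' hneF v with hvmindef
  have hvmax : ∀ k, v k ≤ vmax := fun k => Finset.le_sup' v (Finset.mem_univ k)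
  have hvmin : ∀ k, vmin ≤ v k := fun k => Finset.inf'_le v (Finset.mem_univ k)
  have hvminpos : 0 < vmin := by
    obtain ⟨k, _, hk⟩ := Finset.exists_mem_eq_inf' hneF v
    rw [hvmindef, hk]; exact hv k
  have hvmaxpos : 0 < vmax := lt_of_lt_of_le (hv (Classical.arbitrary _)) (hvmax _)
  have hinvB : ∀ k, (v k)⁻¹ ≤ vmin⁻¹ := fun k =>
    inv_anti₀ hvminpos (hvmin k)
  -- lower bound for Sn
  have hSnlb : ∀ n, vmax⁻¹ ≤ Sn n := by
    intro n
    have h1 : ∑ k, (Pch ^ n) i k * vmax⁻¹ ≤ Sn n := by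
      simp only [hSn]
      refine Finset.sum_le_sum fun k _ => ?_
      exact mul_le_mul_of_nonneg_left (inv_anti₀ (hv k) (hvmax k)) (hPownn n i k)
    calc vmax⁻¹ = ∑ k, (Pch ^ n) i k * vmax⁻¹ := by
          rw [← Finset.sum_mul, hrown n i, one_mul]
      _ ≤ Sn n := h1
  have hSnpos : ∀ n, 0 < Sn n := fun n =>
    lt_of_lt_of_le (inv_pos.mpr hvmaxpos) (hSnlb n)
  -- limit quantities
  set S : ℝ := ∑ k, pich k / v k with hSdef
  have hSpos : 0 < S := Finset.sum_pos (fun k _ => div_pos (hpichpos k) (hv k)) hneF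
  set b : ℝ := pich j * (v j)⁻¹ with hbdef
  have hbpos : 0 < b := mul_pos (hpichpos j) (inv_pos.mpr (hv j))
  have hpit : pitilde j = b / S := by
    rw [hpitilde j, hα, hbdef]
    rw [div_eq_mul_inv, div_eq_mul_inv]
    ring
  -- error bounds
  have hab : ∀ n, |a n - b| ≤ C * vmin⁻¹ * r ^ n := by
    intro n
    have h1 : a n - b = ((Pch ^ n) i j - pich j) * (v j)⁻¹ := by
      simp only [ha, hbdef]; ring
    rw [h1, abs_mul, abs_of_nonneg (inv_nonneg.mpr (hv j).le)]
    calc |(Pch ^ n) i j - pich j| * (v j)⁻¹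
        ≤ (C * r ^ n) * vmin⁻¹ :=
          mul_le_mul (hbound n i j) (hinvB j) (inv_nonneg.mpr (hv j).le) (by positivity)
      _ = C * vmin⁻¹ * r ^ n := by ring
  have hSnS : ∀ n, |Sn n - S| ≤ (N₀ : ℝ) * (C * vmin⁻¹ * r ^ n) := by
    intro n
    have h1 : Sn n - S = ∑ k, ((Pch ^ n) i k * (v k)⁻¹ - pich k / v k) := by
      simp only [hSn, hSdef]
      rw [Finset.sum_sub_distrib]
    rw [h1]
    calc |∑ k, ((Pch ^ n) i k * (v k)⁻¹ - pich k / v k)|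
        ≤ ∑ k, |(Pch ^ n) i k * (v k)⁻¹ - pich k / v k| :=
          Finset.abs_sum_le_sum_abs _ _
      _ ≤ ∑ _k : Fin N₀, C * vmin⁻¹ * r ^ n := by
          refine Finset.sum_le_sum fun k _ => ?_
          rw [div_eq_mul_inv, ← sub_mul, abs_mul, abs_of_nonneg (inv_nonneg.mpr (hv k).le)]
          calc |(Pch ^ n) i k - pich k| * (v k)⁻¹
              ≤ (C * r ^ n) * vmin⁻¹ :=
                mul_le_mul (hbound n i k) (hinvB k) (inv_nonneg.mpr (hv k).le) (by positivity)
            _ = C * vmin⁻¹ * r ^ n := by ring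
      _ = (N₀ : ℝ) * (C * vmin⁻¹ * r ^ n) := by
          simp [Finset.sum_const, Finset.card_univ]
  -- final constant
  set Cf : ℝ := (S + b * N₀) * (C * vmin⁻¹) * vmax / S with hCfdef
  have hCf : 0 ≤ Cf := by
    have : (0:ℝ) ≤ vmin⁻¹ := (inv_pos.mpr hvminpos).le
    positivity
  have hbd : ∀ n, |a n / Sn n - pitilde j| ≤ Cf * r ^ n := by
    intro n
    rw [hpit]
    rw [div_sub_div _ _ (hSnpos n).ne' hSpos.ne']
    rw [abs_div, abs_of_pos (mul_pos (hSnpos n) hSpos)]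
    have hnum : |a n * S - Sn n * b| ≤ (S + b * N₀) * (C * vmin⁻¹) * r ^ n := by
      have h1 : a n * S - Sn n * b = (a n - b) * S + b * (S - Sn n) := by ring
      rw [h1]
      calc |(a n - b) * S + b * (S - Sn n)|
          ≤ |(a n - b) * S| + |b * (S - Sn n)| := abs_add_le _ _
        _ = |a n - b| * S + b * |Sn n - S| := by
            rw [abs_mul, abs_mul, abs_of_pos hSpos, abs_of_pos hbpos, abs_sub_comm S (Sn n)]
        _ ≤ (C * vmin⁻¹ * r ^ n) * S + b * ((N₀ : ℝ) * (C * vmin⁻¹ * r ^ n)) := by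
            gcongr
            · exact hab n
            · exact hSnS n
        _ = (S + b * N₀) * (C * vmin⁻¹) * r ^ n := by ring
    calc |a n * S - Sn n * b| / (Sn n * S)
        ≤ ((S + b * N₀) * (C * vmin⁻¹) * r ^ n) / (vmax⁻¹ * S) := by
          refine div_le_div₀ (by positivity) hnum
            (mul_pos (inv_pos.mpr hvmaxpos) hSpos) ?_
          exact mul_le_mul_of_nonneg_right (hSnlb n) hSpos.le
      _ = Cf * r ^ n := by
          rw [hCfdef]
          field_simp
  refine ⟨?_, Cf, r, hCf, hr0, hr1, fun n => by rw [hratio n]; exact hbd n⟩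
  have htt : Tendsto (fun n : ℕ => Cf * r ^ n) atTop (nhds 0) := by
    have h := tendsto_pow_atTop_nhds_zero_of_lt_one hr0 hr1
    simpa using h.const_mul Cf
  have h0 : Tendsto (fun n : ℕ => (M ^ n) i j / ∑ k, (M ^ n) i k - pitilde j)
      atTop (nhds 0) := by
    refine squeeze_zero_norm (fun n => ?_) htt
    rw [Real.norm_eq_abs, hratio n]
    exact hbd n
  exact tendsto_sub_nhds_zero_iff.mp h0
end
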